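/- (Main Theorem, formula (4).) Let q ∈ ℂ be nonzero and not a root of unity, let p ∈ ℂ[[X]] satisfy constantCoeff p = 0 and coeff 1 p = q, and let f ∈ ℂ[[X]] with constantCoeff f = 0 and coeff 1 f = 1 satisfy the Poincaré functional equation rescale q f = p ∘ f. Let j ≥ 1 be a natural number and let g ∈ ℂ[x] be any nonzero polynomial of j-th q-difference order, i.e. g(q^m) = 0 for all natural numbers m with 0 ≤ m < j and g(q^j) ≠ 0. Then the j-th coefficient of f is given nonrecursively by coeff j f = (1 / g(q^j)) · Σ_{i=0}^{natDegree g} (g.coeff i) · coeff j (p^{∘i}), where p^{∘i} denotes the i-th compositional iterate of p. -/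

import Mathlib

open PowerSeries

/-- Composition of formal power series: `psComp g h = g ∘ h`, with
`coeff j (g ∘ h) = ∑_{l=0}^{j} (coeff l g) * (coeff j (h^l))`. -/
noncomputable def psComp (g h : PowerSeries ℂ) : PowerSeries ℂ :=
  PowerSeries.mk fun j =>
    ∑ l ∈ Finset.range (j + 1), (coeff l g) * (coeff j (h ^ l))


/-- Compositional iterates: `psIter p 0 = X`, `psIter p (i+1) = p ∘ (psIter p i)`. -/
noncomputable def psIter (p : PowerSeries ℂ) : ℕ → PowerSeries ℂ
  | 0 => PowerSeries.X
  | i + 1 => psComp p (psIter p i)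

open Finset

lemma coeff_psComp (g h : PowerSeries ℂ) (j : ℕ) :
    coeff j (psComp g h) = ∑ l ∈ range (j + 1), (coeff l g) * (coeff j (h ^ l)) := by
  simp [psComp, coeff_mk]

lemma coeff_pow_zero {f : PowerSeries ℂ} (hf : constantCoeff f = 0) {l m : ℕ} (h : l < m) :
    coeff l (f ^ m) = 0 := by
  have h1 : (X : PowerSeries ℂ) ∣ f := X_dvd_iff.mpr hf
  exact (X_pow_dvd_iff.mp (pow_dvd_pow_of_dvd h1 m)) l h

lemma coeff_aeval {f : PowerSeries ℂ} (hf : constantCoeff f = 0) (P : Polynomial ℂ) (j : ℕ) :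
    coeff j (Polynomial.aeval f P) = ∑ l ∈ range (j + 1), P.coeff l * coeff j (f ^ l) := by
  have hsub : range (j + 1) ⊆ range (max (P.natDegree + 1) (j + 1)) :=
    Finset.range_subset_range.mpr (le_max_right _ _)
  have hzero : ∀ l ∈ range (max (P.natDegree + 1) (j + 1)), l ∉ range (j + 1) →
      coeff j (P.coeff l • f ^ l) = 0 := by
    intro l _ hl
    have hjl : j < l := by
      by_contra h
      exact hl (Finset.mem_range.mpr (Nat.lt_succ_of_le (not_lt.mp h)))
    rw [coeff_smul, coeff_pow_zero hf hjl, smul_zero]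
  rw [Polynomial.aeval_eq_sum_range' (n := max (P.natDegree + 1) (j + 1))
    (lt_of_lt_of_le (Nat.lt_succ_self _) (le_max_left _ _)) f, map_sum,
    ← Finset.sum_subset hsub hzero]
  exact Finset.sum_congr rfl fun l _ => by rw [coeff_smul, smul_eq_mul]

lemma coeff_psComp_aeval {f : PowerSeries ℂ} (hf : constantCoeff f = 0)
    (g : PowerSeries ℂ) {j N : ℕ} (hjN : j < N) :
    coeff j (psComp g f) = coeff j (Polynomial.aeval f (trunc N g)) := by
  rw [coeff_psComp, coeff_aeval hf]
  refine Finset.sum_congr rfl fun l hl => ?_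
  rw [coeff_trunc, if_pos (lt_of_lt_of_le (Finset.mem_range.mp hl) hjN)]

lemma psComp_mul {f : PowerSeries ℂ} (hf : constantCoeff f = 0) (A B : PowerSeries ℂ) :
    psComp (A * B) f = psComp A f * psComp B f := by
  ext j
  have h1 : coeff j (psComp (A * B) f)
      = coeff j (Polynomial.aeval f (trunc (j + 1) (A * B))) :=
    coeff_psComp_aeval hf _ (Nat.lt_succ_self j)
  have h2 : coeff j (Polynomial.aeval f (trunc (j + 1) (A * B)))
      = coeff j (Polynomial.aeval f (trunc (j + 1) A * trunc (j + 1) B)) := by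
    rw [coeff_aeval hf, coeff_aeval hf]
    refine Finset.sum_congr rfl fun l hl => ?_
    have hlj : l < j + 1 := Finset.mem_range.mp hl
    congr 1
    rw [coeff_trunc, if_pos hlj, PowerSeries.coeff_mul, Polynomial.coeff_mul]
    refine Finset.sum_congr rfl fun xy hxy => ?_
    have hx : xy.1 < j + 1 := lt_of_le_of_lt (Finset.HasAntidiagonal.antidiagonal.fst_le hxy) hlj
    have hy : xy.2 < j + 1 := lt_of_le_of_lt (Finset.HasAntidiagonal.antidiagonal.snd_le hxy) hlj
    rw [coeff_trunc, coeff_trunc, if_pos hx, if_pos hy]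
  have h3 : coeff j (Polynomial.aeval f (trunc (j + 1) A * trunc (j + 1) B))
      = coeff j (psComp A f * psComp B f) := by
    rw [map_mul, PowerSeries.coeff_mul, PowerSeries.coeff_mul]
    refine Finset.sum_congr rfl fun uv huv => ?_
    have hu : uv.1 < j + 1 :=
      Nat.lt_succ_of_le (Finset.HasAntidiagonal.antidiagonal.fst_le huv)
    have hv : uv.2 < j + 1 :=
      Nat.lt_succ_of_le (Finset.HasAntidiagonal.antidiagonal.snd_le huv)
    rw [← coeff_psComp_aeval hf A hu, ← coeff_psComp_aeval hf B hv]
  rw [h1, h2, h3]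

lemma psComp_one {f : PowerSeries ℂ} (hf : constantCoeff f = 0) :
    psComp 1 f = 1 := by
  ext j
  rw [coeff_psComp_aeval hf 1 (Nat.lt_succ_self j), trunc_one, map_one]

lemma psComp_pow {f : PowerSeries ℂ} (hf : constantCoeff f = 0) (A : PowerSeries ℂ) (m : ℕ) :
    psComp (A ^ m) f = (psComp A f) ^ m := by
  induction m with
  | zero => simpa using psComp_one hf
  | succ n ih => rw [pow_succ, pow_succ, psComp_mul hf, ih]

lemma psComp_assoc {P f : PowerSeries ℂ} (hP : constantCoeff P = 0)
    (hf : constantCoeff f = 0) (p : PowerSeries ℂ) :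
    psComp (psComp p P) f = psComp p (psComp P f) := by
  ext j
  rw [coeff_psComp, coeff_psComp]
  have hR : ∀ m, coeff j ((psComp P f) ^ m)
      = ∑ l ∈ range (j + 1), coeff l (P ^ m) * coeff j (f ^ l) := fun m => by
    rw [← psComp_pow hf, coeff_psComp]
  have hL : ∀ l ∈ range (j + 1), coeff l (psComp p P) * coeff j (f ^ l)
      = ∑ m ∈ range (j + 1), coeff m p * coeff l (P ^ m) * coeff j (f ^ l) := by
    intro l hl
    have hsub : range (l + 1) ⊆ range (j + 1) :=
      Finset.range_subset_range.mpr (Finset.mem_range.mp hl)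
    have hzero : ∀ m ∈ range (j + 1), m ∉ range (l + 1) →
        coeff m p * coeff l (P ^ m) = 0 := by
      intro m _ hm
      have : l < m := by
        by_contra h
        exact hm (Finset.mem_range.mpr (Nat.lt_succ_of_le (not_lt.mp h)))
      rw [coeff_pow_zero hP this, mul_zero]
    rw [coeff_psComp, Finset.sum_subset hsub hzero, Finset.sum_mul]
  rw [Finset.sum_congr rfl hL, Finset.sum_comm]
  simp_rw [hR, Finset.mul_sum, mul_assoc]

lemma psComp_rescale (p f : PowerSeries ℂ) (a : ℂ) :
    psComp p (rescale a f) = rescale a (psComp p f) := by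
  ext j
  rw [coeff_psComp, coeff_rescale, coeff_psComp, Finset.mul_sum]
  refine Finset.sum_congr rfl fun m _ => ?_
  rw [← map_pow (rescale a) f m, coeff_rescale]
  ring

lemma psComp_X_left {f : PowerSeries ℂ} (hf : constantCoeff f = 0) :
    psComp X f = f := by
  ext j
  rw [coeff_psComp]
  rcases Nat.eq_zero_or_pos j with hj | hj
  · subst hj
    simp [coeff_zero_eq_constantCoeff, hf]
  · rw [Finset.sum_eq_single 1]
    · simp
    · intro l _ hl
      rw [coeff_X, if_neg hl, zero_mul]
    · intro h
      exact absurd (Finset.mem_range.mpr (Nat.lt_succ_of_le hj)) h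

lemma psIter_const {p : PowerSeries ℂ} (hp : constantCoeff p = 0) (i : ℕ) :
    constantCoeff (psIter p i) = 0 := by
  induction i with
  | zero => simp [psIter]
  | succ n ih =>
    rw [psIter, ← coeff_zero_eq_constantCoeff_apply, coeff_psComp, Finset.sum_range_one]
    simp [← coeff_zero_eq_constantCoeff_apply, hp]

lemma iterKey {q : ℂ} {p f : PowerSeries ℂ} (hp0 : constantCoeff p = 0)
    (hf0 : constantCoeff f = 0) (hpoincare : rescale q f = psComp p f) (i : ℕ) :
    psComp (psIter p i) f = rescale (q ^ i) f := by
  induction i with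
  | zero => simp [psIter, psComp_X_left hf0]
  | succ n ih =>
    rw [psIter, psComp_assoc (psIter_const hp0 n) hf0, ih, psComp_rescale, ← hpoincare,
      rescale_rescale, pow_succ, mul_comm]

lemma coeff_pow_self {f : PowerSeries ℂ} (hf0 : constantCoeff f = 0)
    (hf1 : coeff 1 f = 1) (l : ℕ) : coeff l (f ^ l) = 1 := by
  induction l with
  | zero => simp
  | succ n ih =>
    rw [pow_succ, mul_comm, PowerSeries.coeff_mul, Finset.sum_eq_single (1, n)]
    · rw [hf1, ih, one_mul]
    · intro uv huv hne
      have hsum := Finset.HasAntidiagonal.mem_antidiagonal.mp huv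
      rcases Nat.eq_zero_or_pos uv.1 with h0 | h0
      · rw [h0, coeff_zero_eq_constantCoeff, hf0, zero_mul]
      · have : uv.2 < n := by
          rcases Nat.lt_or_ge uv.2 n with h | h
          · exact h
          · exfalso
            have h1 : uv.1 ≤ 1 := by omega
            have : uv.1 = 1 := le_antisymm h1 h0
            exact hne (by rw [Prod.ext_iff]; exact ⟨this, by omega⟩)
        rw [coeff_pow_zero hf0 this, mul_zero]
    · intro h
      exact absurd (Finset.HasAntidiagonal.mem_antidiagonal.mpr (by omega)) h

noncomputable def CC (f : PowerSeries ℂ) : ℕ → ℕ → ℂ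
  | l, m =>
    if m = l then coeff l f
    else -(∑ t ∈ (Finset.range l).attach, CC f t.1 m * coeff l (f ^ t.1))
decreasing_by exact Finset.mem_range.mp t.2

lemma CC_diag (f : PowerSeries ℂ) (l : ℕ) : CC f l l = coeff l f := by
  rw [CC, if_pos rfl]

lemma CC_ne (f : PowerSeries ℂ) {l m : ℕ} (h : m ≠ l) :
    CC f l m = -(∑ t ∈ Finset.range l, CC f t m * coeff l (f ^ t)) := by
  rw [CC, if_neg h]
  congr 1
  exact Finset.sum_attach (Finset.range l) (fun t => CC f t m * coeff l (f ^ t))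

lemma CC_gt (f : PowerSeries ℂ) (l : ℕ) : ∀ m, l < m → CC f l m = 0 := by
  induction l using Nat.strong_induction_on with
  | _ l ih =>
    intro m hm
    rw [CC_ne f (by omega)]
    rw [Finset.sum_eq_zero, neg_zero]
    intro t ht
    rw [ih t (Finset.mem_range.mp ht) m (by have := Finset.mem_range.mp ht; omega), zero_mul]

lemma coeff_psIter {q : ℂ} {p f : PowerSeries ℂ} (hp0 : constantCoeff p = 0)
    (hf0 : constantCoeff f = 0) (hf1 : coeff 1 f = 1)
    (hpoincare : rescale q f = psComp p f) (i : ℕ) (l : ℕ) :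
    coeff l (psIter p i) = ∑ m ∈ Finset.range (l + 1), CC f l m * (q ^ i) ^ m := by
  induction l using Nat.strong_induction_on with
  | _ l ih =>
    have hkey := congrArg (coeff l) (iterKey hp0 hf0 hpoincare i)
    rw [coeff_psComp, coeff_rescale, Finset.sum_range_succ,
      coeff_pow_self hf0 hf1, mul_one] at hkey
    have hA : coeff l (psIter p i)
        = (q ^ i) ^ l * coeff l f
          - ∑ t ∈ Finset.range l, coeff t (psIter p i) * coeff l (f ^ t) := by
      rw [← hkey]; ring
    have hIH : ∀ t ∈ Finset.range l, coeff t (psIter p i) * coeff l (f ^ t)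
        = ∑ m ∈ Finset.range l, CC f t m * (q ^ i) ^ m * coeff l (f ^ t) := by
      intro t ht
      have htl : t < l := Finset.mem_range.mp ht
      rw [ih t htl, ← Finset.sum_mul]
      congr 1
      refine Finset.sum_subset (Finset.range_subset_range.mpr htl) ?_
      intro m _ hm
      rw [CC_gt f t m (by simp at hm; omega), zero_mul]
    rw [hA, Finset.sum_congr rfl hIH, Finset.sum_comm, Finset.sum_range_succ, CC_diag]
    have : ∀ m ∈ Finset.range l,
        ∑ t ∈ Finset.range l, CC f t m * (q ^ i) ^ m * coeff l (f ^ t)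
        = -(CC f l m * (q ^ i) ^ m) := by
      intro m hm
      rw [CC_ne f (by have := Finset.mem_range.mp hm; omega)]
      rw [neg_mul, neg_neg, Finset.sum_mul]
      refine Finset.sum_congr rfl fun t _ => by ring
    rw [Finset.sum_congr rfl this]
    simp only [Finset.sum_neg_distrib]
    ring

theorem stmt_6 (q : ℂ) (hq0 : q ≠ 0) (hq1 : ∀ k : ℕ, 0 < k → q ^ k ≠ 1)
    (p : PowerSeries ℂ) (hp0 : constantCoeff p = 0) (hp1 : coeff 1 p = q)
    (f : PowerSeries ℂ) (hf0 : constantCoeff f = 0) (hf1 : coeff 1 f = 1)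
    (hpoincare : rescale q f = psComp p f)
    (j : ℕ) (hj : 1 ≤ j) (g : Polynomial ℂ) (hgne : g ≠ 0)
    (hgord : ∀ m : ℕ, m < j → g.eval (q ^ m) = 0) (hgj : g.eval (q ^ j) ≠ 0) :
    coeff j f =
      (1 / g.eval (q ^ j)) *
        ∑ i ∈ Finset.range (g.natDegree + 1), g.coeff i * coeff j (psIter p i) := by
  have hS : ∑ i ∈ Finset.range (g.natDegree + 1), g.coeff i * coeff j (psIter p i)
      = coeff j f * g.eval (q ^ j) := by
    have h1 : ∀ i ∈ Finset.range (g.natDegree + 1),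
        g.coeff i * coeff j (psIter p i)
        = ∑ m ∈ Finset.range (j + 1), CC f j m * (g.coeff i * (q ^ m) ^ i) := by
      intro i _
      rw [coeff_psIter hp0 hf0 hf1 hpoincare i j, Finset.mul_sum]
      refine Finset.sum_congr rfl fun m _ => ?_
      rw [← pow_mul, mul_comm i m, pow_mul]
      ring
    have h2 : ∀ m ∈ Finset.range (j + 1),
        ∑ i ∈ Finset.range (g.natDegree + 1), CC f j m * (g.coeff i * (q ^ m) ^ i)
        = CC f j m * g.eval (q ^ m) := by
      intro m _
      rw [← Finset.mul_sum, ← Polynomial.eval_eq_sum_range]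
    have h3 : ∀ m ∈ Finset.range j, CC f j m * g.eval (q ^ m) = 0 := fun m hm => by
      rw [hgord m (Finset.mem_range.mp hm), mul_zero]
    rw [Finset.sum_congr rfl h1, Finset.sum_comm, Finset.sum_congr rfl h2,
      Finset.sum_range_succ, CC_diag, Finset.sum_eq_zero h3, zero_add]
  rw [hS]
  field_simp
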